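/- Let P ⊆ ℝ^d be a polytope with 0 in its interior, and suppose every vertex of P has at most two nonzero coordinates, and moreover for every vertex v with nonzero coordinates at positions i and j, the coordinate projections π_i(v) and π_j(v) (setting that coordinate to 0) are also points of P. Then P is locally anti-blocking. -/

import Mathlib

open Set

/-- A polytope: the convex hull of a finite set of points. -/
def IsPolytope {ι : Type*} (P : Set (ι → ℝ)) : Prop :=
  ∃ V : Finset (ι → ℝ), P = convexHull ℝ (V : Set (ι → ℝ))

/-- A set `Q` (inside the nonnegative orthant) is anti-blocking if it is closed under
coordinatewise decrease within the nonnegative orthant. -/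
def AntiBlocking {ι : Type*} (Q : Set (ι → ℝ)) : Prop :=
  ∀ x ∈ Q, ∀ y : ι → ℝ, (∀ i, 0 ≤ y i ∧ y i ≤ x i) → y ∈ Q

/-- A polytope `P` is locally anti-blocking if for every sign vector `σ ∈ {-1,1}^d`,
the restriction of `σP` to the nonnegative orthant is anti-blocking. -/
def LocallyAntiBlocking {ι : Type*} (P : Set (ι → ℝ)) : Prop :=
  ∀ σ : ι → ℝ, (∀ i, σ i = 1 ∨ σ i = -1) →
    AntiBlocking (((fun x i => σ i * x i) '' P) ∩ {x : ι → ℝ | ∀ i, 0 ≤ x i})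

/-! Zeroing a coordinate is linear, so the points that stay in `P` when coordinate `k` is zeroed
form a convex set; it contains every vertex (one with a single nonzero coordinate goes to `0`),
hence all of `P`. Writing `update x k (c * x k)` as the convex
combination `c • x + (1 - c) • update x k 0` and scaling one coordinate at a time, `P` is then
closed under coordinatewise multiplication by any `t ∈ [0, 1]^d`. Finally, if `0 ≤ y ≤ σ p`
coordinatewise with `p ∈ P`, then `y = σ (t p)` for `t = y / (σ p)`. -/

open Function

variable {ι : Type*}

theorem IsPolytope.eq_convexHull_extremePoints {P : Set (ι → ℝ)} (hP : IsPolytope P) :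
    P = convexHull ℝ (P.extremePoints ℝ) := by
  obtain ⟨V, rfl⟩ := hP
  have hfin : (extremePoints ℝ (convexHull ℝ (V : Set (ι → ℝ)))).Finite :=
    V.finite_toSet.subset extremePoints_convexHull_subset
  rw [← (hfin.isClosed_convexHull ℝ).closure_eq, closure_convexHull_extremePoints
    (V.finite_toSet.isCompact_convexHull ℝ) (convex_convexHull ℝ _)]

theorem Convex.update_zero_mem {𝕜 E : Type*} [Semiring 𝕜] [PartialOrder 𝕜] [AddCommMonoid E]
    [Module 𝕜 E] [DecidableEq ι] {P S : Set (ι → E)} (hP : Convex 𝕜 P)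
    (hPS : P ⊆ convexHull 𝕜 S) (k : ι) (hS : ∀ v ∈ S, update v k 0 ∈ P) {x : ι → E}
    (hx : x ∈ P) : update x k 0 ∈ P := by
  have hconv : Convex 𝕜 {x | update x k 0 ∈ P} := by
    intro y hy z hz a b ha hb hab
    have hlin : update (a • y + b • z) k 0 = a • update y k 0 + b • update z k 0 := by
      ext j
      rcases eq_or_ne j k with rfl | hj <;> simp [*]
    show update (a • y + b • z) k 0 ∈ P
    rw [hlin]
    exact hP hy hz ha hb hab
  exact convexHull_min hS hconv (hPS hx)

section Scaling

variable {𝕜 : Type*} [CommRing 𝕜] [PartialOrder 𝕜] [IsOrderedRing 𝕜] [DecidableEq ι]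

theorem Convex.update_mul_mem {P : Set (ι → 𝕜)} (hP : Convex 𝕜 P)
    (hzero : ∀ x ∈ P, ∀ k, update x k 0 ∈ P) {w : ι → 𝕜} (hw : w ∈ P) (i : ι) {c : 𝕜}
    (hc : c ∈ Icc 0 1) : update w i (c * w i) ∈ P := by
  have hcomb : update w i (c * w i) = c • w + (1 - c) • update w i 0 := by
    ext j
    rcases eq_or_ne j i with rfl | hj
    · simp
    · simp only [update_of_ne hj, Pi.add_apply, Pi.smul_apply, smul_eq_mul]
      ring
  rw [hcomb]
  exact hP hw (hzero w hw i) hc.1 (sub_nonneg.2 hc.2) (by ring)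

theorem Convex.mul_mem_of_update_zero_mem [Fintype ι] {P : Set (ι → 𝕜)} (hP : Convex 𝕜 P)
    (hzero : ∀ x ∈ P, ∀ k, update x k 0 ∈ P) {x : ι → 𝕜} (hx : x ∈ P) {t : ι → 𝕜}
    (ht : ∀ i, t i ∈ Icc 0 1) : t * x ∈ P := by
  suffices ∀ s : Finset ι, s.piecewise (t * x) x ∈ P by simpa using this Finset.univ
  intro s
  induction s using Finset.induction_on with
  | empty => simpa using hx
  | insert i s hi ih =>
    rw [Finset.piecewise_insert]
    simpa [Finset.piecewise_eq_of_notMem _ _ _ hi] using hP.update_mul_mem hzero ih i (ht i)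

end Scaling

theorem locallyAntiBlocking_of_mul_mem {P : Set (ι → ℝ)}
    (h : ∀ x ∈ P, ∀ t : ι → ℝ, (∀ i, t i ∈ Icc 0 1) → t * x ∈ P) : LocallyAntiBlocking P := by
  rintro σ - _ ⟨⟨p, hp, rfl⟩, -⟩ y hy
  set x : ι → ℝ := fun i => σ i * p i
  have hx : ∀ i, 0 ≤ x i := fun i => (hy i).1.trans (hy i).2
  refine ⟨⟨(y / x) * p, h p hp _ fun i => ⟨div_nonneg (hy i).1 (hx i),
    div_le_one_of_le₀ (hy i).2 (hx i)⟩, ?_⟩, fun i => (hy i).1⟩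
  funext i
  rcases eq_or_ne (x i) 0 with hxi | hxi
  · have : y i = 0 := le_antisymm (hxi ▸ (hy i).2) (hy i).1
    simp [this]
  · simp only [Pi.mul_apply, Pi.div_apply]
    rw [← mul_assoc, mul_comm (σ i), mul_assoc, div_mul_cancel₀ _ hxi]

theorem locallyAntiBlocking_of_vertex_conditions_general {d : ℕ} (P : Set (Fin d → ℝ))
    (hP : IsPolytope P) (h0 : (0 : Fin d → ℝ) ∈ interior P)
    (hproj : ∀ v ∈ Set.extremePoints ℝ P, ∀ i j : Fin d, i ≠ j →
      v i ≠ 0 → v j ≠ 0 →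
        Function.update v i 0 ∈ P ∧ Function.update v j 0 ∈ P) :
    LocallyAntiBlocking P := by
  have hconv : Convex ℝ P := by
    obtain ⟨V, rfl⟩ := hP
    exact convex_convexHull ℝ _
  have hvert : ∀ v ∈ P.extremePoints ℝ, ∀ k, update v k 0 ∈ P := by
    intro v hv k
    by_cases hvk : v k = 0
    · rw [update_eq_self_iff.2 hvk.symm]
      exact hv.1
    by_cases hother : ∃ j ≠ k, v j ≠ 0
    · obtain ⟨j, hjk, hvj⟩ := hother
      exact (hproj v hv k j hjk.symm hvk hvj).1
    · push Not at hother
      rw [update_eq_iff.2 ⟨rfl, hother⟩]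
      exact interior_subset h0
  have hzero : ∀ x ∈ P, ∀ k, update x k 0 ∈ P := fun x hx k =>
    hconv.update_zero_mem hP.eq_convexHull_extremePoints.subset k (fun v hv => hvert v hv k) hx
  exact locallyAntiBlocking_of_mul_mem fun x hx t ht => hconv.mul_mem_of_update_zero_mem hzero hx ht

/-- Let `P ⊆ ℝ^d` be a polytope with `0` in its interior such that every
vertex has at most two nonzero coordinates, and for every vertex `v` with nonzero
coordinates at positions `i` and `j`, the points obtained by zeroing either coordinate also
lie in `P`.  Then `P` is locally anti-blocking. -/
theorem locallyAntiBlocking_of_vertex_conditions {d : ℕ} (P : Set (Fin d → ℝ))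
    (hP : IsPolytope P) (h0 : (0 : Fin d → ℝ) ∈ interior P)
    (hsupp : ∀ v ∈ Set.extremePoints ℝ P, Set.ncard {i | v i ≠ 0} ≤ 2)
    (hproj : ∀ v ∈ Set.extremePoints ℝ P, ∀ i j : Fin d, i ≠ j →
      v i ≠ 0 → v j ≠ 0 →
        Function.update v i 0 ∈ P ∧ Function.update v j 0 ∈ P) :
    LocallyAntiBlocking P :=
  locallyAntiBlocking_of_vertex_conditions_general P hP h0 hproj
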